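/- For real r > 0, the function x ↦ 1/(1+x/r)^{2r+1} − x²/(r(x+r)) on x ≥ 0 equals 1 at x = 0 and is strictly decreasing in x; hence it has a unique positive root φ(r). -/
import Mathlib

/-- The function `x ↦ 1/(1+x/r)^{2r+1} - x²/(r(x+r))` on `x ≥ 0` equals `1` at `x = 0`,
is strictly decreasing, and has a unique positive root. -/
theorem lambert_type_function_unique_root (r : ℝ) (hr : 0 < r) :
    (1 / (1 + 0 / r) ^ (2 * r + 1) - 0 ^ 2 / (r * (0 + r)) = 1) ∧
    StrictAntiOn (fun x : ℝ => 1 / (1 + x / r) ^ (2 * r + 1) - x ^ 2 / (r * (x + r)))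
      (Set.Ici 0) ∧
    ∃! x : ℝ, 0 < x ∧ 1 / (1 + x / r) ^ (2 * r + 1) - x ^ 2 / (r * (x + r)) = 0 := by
  set f : ℝ → ℝ := fun x => 1 / (1 + x / r) ^ (2 * r + 1) - x ^ 2 / (r * (x + r)) with hf
  have hexp : (0 : ℝ) < 2 * r + 1 := by linarith
  have hf0 : f 0 = 1 := by
    simp [hf, Real.one_rpow]
  have hanti : StrictAntiOn f (Set.Ici 0) := by
    intro a ha b hb hab
    simp only [Set.mem_Ici] at ha hb
    have hra : (0:ℝ) < 1 + a / r := by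
      have : 0 ≤ a / r := div_nonneg ha hr.le
      linarith
    have hrb : (0:ℝ) < 1 + b / r := by
      have : 0 ≤ b / r := div_nonneg hb hr.le
      linarith
    have h1 : (1 + a / r) ^ (2 * r + 1) < (1 + b / r) ^ (2 * r + 1) := by
      apply Real.rpow_lt_rpow hra.le _ hexp
      gcongr
    have h1' : 1 / (1 + b / r) ^ (2 * r + 1) < 1 / (1 + a / r) ^ (2 * r + 1) :=
      one_div_lt_one_div_of_lt (Real.rpow_pos_of_pos hra _) h1
    have h2 : a ^ 2 / (r * (a + r)) < b ^ 2 / (r * (b + r)) := by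
      rw [div_lt_div_iff₀ (by positivity) (by positivity)]
      have h3 : 0 ≤ a * b * (b - a) := mul_nonneg (mul_nonneg ha hb) (by linarith)
      have h4 : a ^ 2 < b ^ 2 := by nlinarith
      nlinarith [mul_pos hr (show (0:ℝ) < b ^ 2 - a ^ 2 by linarith), mul_pos hr (show (0:ℝ) < r by exact hr)]
    exact sub_lt_sub h1' h2
  refine ⟨by simpa using hf0, hanti, ?_⟩
  set M : ℝ := 2 * r + 1 with hM
  have hMpos : 0 < M := by positivity
  have hfM : f M < 0 := by
    have hbase : (1:ℝ) ≤ 1 + M / r := by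
      have : 0 ≤ M / r := by positivity
      linarith
    have hpow : (1:ℝ) ≤ (1 + M / r) ^ (2 * r + 1) := by
      calc (1:ℝ) = (1:ℝ) ^ (2 * r + 1) := (Real.one_rpow _).symm
        _ ≤ (1 + M / r) ^ (2 * r + 1) := Real.rpow_le_rpow (by norm_num) hbase hexp.le
    have h1 : 1 / (1 + M / r) ^ (2 * r + 1) ≤ 1 := by
      rw [div_le_one (by linarith)]; exact hpow
    have h2 : (1:ℝ) < M ^ 2 / (r * (M + r)) := by
      rw [lt_div_iff₀ (by positivity)]
      nlinarith
    simp only [hf]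
    linarith
  have hc : ContinuousOn f (Set.Icc 0 M) := by
    apply ContinuousOn.sub
    · apply ContinuousOn.div continuousOn_const
      · exact ContinuousOn.rpow_const (by fun_prop) (fun x hx => Or.inr hexp.le)
      · intro x hx
        have hx0 : 0 ≤ x := hx.1
        have : (0:ℝ) < 1 + x / r := by
          have : 0 ≤ x / r := div_nonneg hx0 hr.le
          linarith
        exact (Real.rpow_pos_of_pos this _).ne'
    · apply ContinuousOn.div (by fun_prop) (by fun_prop)
      intro x hx
      have hx0 : 0 ≤ x := hx.1
      positivity
  have hmem : (0:ℝ) ∈ Set.Icc (f M) (f 0) := ⟨hfM.le, by rw [hf0]; norm_num⟩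
  obtain ⟨x, hxmem, hfx⟩ := intermediate_value_Icc' hMpos.le hc hmem
  have hx0 : 0 < x := by
    rcases lt_or_eq_of_le hxmem.1 with h | h
    · exact h
    · exfalso; rw [← h] at hfx; rw [hf0] at hfx; norm_num at hfx
  refine ⟨x, ⟨hx0, hfx⟩, ?_⟩
  rintro y ⟨hy0, hfy⟩
  exact hanti.injOn (Set.mem_Ici.2 hy0.le) (Set.mem_Ici.2 hx0.le) (hfy.trans hfx.symm)
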